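/- Under the Hoeffding decomposition of the U-statistic U_n with symmetric kernel g_{y,h}, its first projection is g_{y,h,1}(x₁) = E[g_{y,h}(x₁, Z)] − Θ, with Z ∼ μ and Θ = E[g_{y,h}(Z₁, Z₂)], and explicitly g_{y,h,1}(x₁) = (1/(2h))·K((d²(x₁)−y)/h) − Θ/2 + E_Z[(1/(2mh²))·K'((d²(Z)−y)/h)·Ψ(x₁, Z)], where Ψ(x₁, x₂) = min(‖x₁−x₂‖², F_{x₂}^{-1}(m)) − E_{Z'}[min(‖Z'−x₂‖², F_{x₂}^{-1}(m))]. -/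

import Mathlib

/-!
Write `κ x = F_x⁻¹(m)`. By Fubini, `∫₀^κ F_x = κ - E[min(‖Z - x‖², κ)]`, and
`∫₀^κ 1{r ≤ t} dt = κ - min(r, κ)`; together they turn each interval integral in `g` into `Ψ`, so
`g x z = A x + A z + B x * Ψ z x + B z * Ψ x z` with `A`, `B` the `K`- and `K'`-terms.
Since `Ψ · a` is centred, integrating in `z` kills `B x * Ψ z x`, and integrating once more
(Fubini again) kills the last term, so `Θ = 2 E[A]`.
What remains is measurability of `d²`: right-continuity of `F_x` gives
`F_x⁻¹(u) ≤ t ↔ u ≤ F_x(t)` for `u ∈ (0, 1]`, which makes the quantile jointly measurable.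
-/

open MeasureTheory ProbabilityTheory Set Filter Topology

lemma intervalIntegrable_ite_le (r a b : ℝ) :
    IntervalIntegrable (fun t => if r ≤ t then (1:ℝ) else 0) volume a b :=
  Monotone.intervalIntegrable fun s t hst => by
    by_cases hs : r ≤ s
    · simp [hs, hs.trans hst]
    · by_cases ht : r ≤ t <;> simp [hs, ht]

lemma intervalIntegral_ite_le_eq {r c : ℝ} (hr : 0 ≤ r) (hc : 0 ≤ c) :
    ∫ t in (0:ℝ)..c, (if r ≤ t then (1:ℝ) else 0) = c - min r c := by
  have hind : (fun t : ℝ => if r ≤ t then (1:ℝ) else 0) = (Ici r).indicator 1 := by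
    ext t; simp [indicator_apply]
  rw [intervalIntegral.integral_of_le hc, hind, integral_indicator_one measurableSet_Ici,
    measureReal_restrict_apply measurableSet_Ici,
    ← measureReal_congr ((Ioi_ae_eq_Ici (μ := volume)).inter (ae_eq_refl (Ioc 0 c))),
    inter_comm, Ioc_inter_Ioi, Real.volume_real_Ioc, max_eq_right hr]
  rcases le_total r c with h | h <;> simp [h]

lemma integral_min_eq_sub_intervalIntegral {α : Type*} [MeasurableSpace α] (ν : Measure α)
    [IsProbabilityMeasure ν] {f : α → ℝ} (hf : Measurable f) (hf0 : ∀ x, 0 ≤ f x) {c : ℝ}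
    (hc : 0 ≤ c) :
    ∫ x, min (f x) c ∂ν = c - ∫ t in (0:ℝ)..c, ν.real {x | f x ≤ t} := by
  have hinner : ∀ x, ∫ t in Ioc (0:ℝ) c, (if f x ≤ t then (1:ℝ) else 0) = c - min (f x) c :=
    fun x => by rw [← intervalIntegral.integral_of_le hc, intervalIntegral_ite_le_eq (hf0 x) hc]
  have hswap : ∫ x, (∫ t in Ioc (0:ℝ) c, (if f x ≤ t then (1:ℝ) else 0)) ∂ν =
      ∫ t in Ioc (0:ℝ) c, ν.real {x | f x ≤ t} := by
    have hmeas : MeasurableSet {p : α × ℝ | f p.1 ≤ p.2} :=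
      measurableSet_le (hf.comp measurable_fst) measurable_snd
    rw [integral_integral_swap]
    · congr 1 with t
      rw [← integral_indicator_one (measurableSet_le hf measurable_const)]
      simp [indicator_apply]
    · refine Integrable.of_bound ?_ 1 (Eventually.of_forall fun p => ?_)
      · exact (Measurable.ite hmeas measurable_const measurable_const).aestronglyMeasurable
      · by_cases hp : f p.1 ≤ p.2 <;> simp [Function.uncurry, hp]
  have hint : Integrable (fun x => min (f x) c) ν := by
    refine Integrable.of_bound (hf.min measurable_const).aestronglyMeasurable c
      (Eventually.of_forall fun x => ?_)
    rw [Real.norm_of_nonneg (le_min (hf0 x) hc)]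
    exact min_le_right _ _
  rw [intervalIntegral.integral_of_le hc, ← hswap]
  simp_rw [hinner]
  rw [integral_sub (integrable_const c) hint, integral_const, probReal_univ, one_smul,
    sub_sub_cancel]

lemma StieltjesFunction.csInf_setOf_le_le_iff (f : StieltjesFunction ℝ) {u : ℝ}
    (hne : ∃ t, u ≤ f t) (hbdd : BddBelow {t | u ≤ f t}) (t : ℝ) :
    sInf {s | u ≤ f s} ≤ t ↔ u ≤ f t := by
  refine ⟨fun ht => ?_, fun ht => csInf_le hbdd ht⟩
  set a := sInf {s | u ≤ f s}
  have habove : ∀ s, a < s → u ≤ f s := fun s hs =>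
    let ⟨s', hs', hs's⟩ := exists_lt_of_csInf_lt hne hs
    le_trans hs' (f.mono hs's.le)
  have ha : u ≤ f a :=
    ge_of_tendsto ((f.right_continuous a).mono Ioi_subset_Ici_self)
      (eventually_nhdsWithin_of_forall habove)
  exact ha.trans (f.mono ht)

section SqDist

variable {E : Type*} [NormedAddCommGroup E] [MeasurableSpace E] (μ : Measure E)

noncomputable def sqDistCDF (x : E) (t : ℝ) : ℝ := μ.real {z | ‖z - x‖ ^ 2 ≤ t}

noncomputable def sqDistQuantile (x : E) (u : ℝ) : ℝ := sInf {t | u ≤ sqDistCDF μ x t}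

variable {μ}

lemma sqDistCDF_of_neg {x : E} {t : ℝ} (ht : t < 0) : sqDistCDF μ x t = 0 := by
  have : {z : E | ‖z - x‖ ^ 2 ≤ t} = ∅ :=
    eq_empty_of_forall_notMem fun z hz => (ht.trans_le (by positivity)).not_ge hz
  simp [sqDistCDF, this]

lemma nonneg_of_le_sqDistCDF {x : E} {u t : ℝ} (hu : 0 < u) (ht : u ≤ sqDistCDF μ x t) :
    0 ≤ t :=
  not_lt.1 fun h => hu.not_ge (ht.trans_eq (sqDistCDF_of_neg h))

lemma bddBelow_setOf_le_sqDistCDF (x : E) {u : ℝ} (hu : 0 < u) :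
    BddBelow {t | u ≤ sqDistCDF μ x t} :=
  ⟨0, fun _ => nonneg_of_le_sqDistCDF hu⟩

lemma sqDistQuantile_nonneg (x : E) {u : ℝ} (hu : 0 < u) : 0 ≤ sqDistQuantile μ x u :=
  Real.sInf_nonneg fun _ => nonneg_of_le_sqDistCDF hu

lemma exists_ae_sq_norm_sub_le {s : Set E} (hs : Bornology.IsBounded s) (hμs : ∀ᵐ z ∂μ, z ∈ s)
    (x : E) : ∃ T, ∀ᵐ z ∂μ, ‖z - x‖ ^ 2 ≤ T :=
  let ⟨R, hR⟩ := hs.subset_closedBall x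
  ⟨R ^ 2, hμs.mono fun _ hz =>
    pow_le_pow_left₀ (norm_nonneg _) (mem_closedBall_iff_norm.1 (hR hz)) 2⟩

variable [OpensMeasurableSpace E] [IsProbabilityMeasure μ]

lemma sqDistCDF_eq_cdf (x : E) :
    sqDistCDF μ x = cdf (μ.map fun z => ‖z - x‖ ^ 2) := by
  have hf : Measurable fun z : E => ‖z - x‖ ^ 2 :=
    ((continuous_id.sub continuous_const).norm.pow 2).measurable
  have := Measure.isProbabilityMeasure_map (μ := μ) hf.aemeasurable
  ext t
  rw [cdf_eq_real, map_measureReal_apply hf measurableSet_Iic]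
  rfl

lemma monotone_sqDistCDF (x : E) : Monotone (sqDistCDF μ x) := by
  rw [sqDistCDF_eq_cdf]
  exact (cdf _).mono

lemma sqDistCDF_eq_one {x : E} {t : ℝ} (h : ∀ᵐ z ∂μ, ‖z - x‖ ^ 2 ≤ t) : sqDistCDF μ x t = 1 := by
  rw [sqDistCDF, measureReal_def, (ae_iff_measure_eq _).1 h, measure_univ, ENNReal.toReal_one]
  exact (measurableSet_le ((continuous_id.sub continuous_const).norm.pow 2).measurable
    measurable_const).nullMeasurableSet

lemma sqDistQuantile_le_of_ae_le {x : E} {u T : ℝ} (hu0 : 0 < u) (hu1 : u ≤ 1)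
    (h : ∀ᵐ z ∂μ, ‖z - x‖ ^ 2 ≤ T) : sqDistQuantile μ x u ≤ T :=
  csInf_le (bddBelow_setOf_le_sqDistCDF x hu0) (hu1.trans (sqDistCDF_eq_one h).ge)

lemma ae_sqDistQuantile_le_sq_diam {s : Set E} (hs : Bornology.IsBounded s)
    (hμs : ∀ᵐ z ∂μ, z ∈ s) {u : ℝ} (hu0 : 0 < u) (hu1 : u ≤ 1) :
    ∀ᵐ x ∂μ, sqDistQuantile μ x u ≤ Metric.diam s ^ 2 :=
  hμs.mono fun x hx => sqDistQuantile_le_of_ae_le hu0 hu1 <| hμs.mono fun z hz =>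
    pow_le_pow_left₀ (norm_nonneg _) (dist_eq_norm z x ▸ Metric.dist_le_diam_of_mem hs hz hx) 2

lemma sqDistQuantile_le_iff {x : E} {u : ℝ} (hu0 : 0 < u) (hu1 : u ≤ 1)
    (hx : ∃ T, ∀ᵐ z ∂μ, ‖z - x‖ ^ 2 ≤ T) (t : ℝ) :
    sqDistQuantile μ x u ≤ t ↔ u ≤ sqDistCDF μ x t := by
  obtain ⟨T, hT⟩ := hx
  have hne : ∃ t, u ≤ sqDistCDF μ x t := ⟨T, hu1.trans (sqDistCDF_eq_one hT).ge⟩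
  have hbdd := bddBelow_setOf_le_sqDistCDF (μ := μ) x hu0
  rw [sqDistQuantile, sqDistCDF_eq_cdf] at *
  exact StieltjesFunction.csInf_setOf_le_le_iff _ hne hbdd t

variable [SecondCountableTopology E]

lemma measurable_uncurry_sqDistCDF : Measurable (Function.uncurry (sqDistCDF μ)) := by
  have hs : MeasurableSet {q : (E × ℝ) × E | ‖q.2 - q.1.1‖ ^ 2 ≤ q.1.2} :=
    measurableSet_le
      ((continuous_snd.sub (continuous_fst.comp continuous_fst)).norm.pow 2).measurable
      (measurable_snd.comp measurable_fst)
  exact (measurable_measure_prodMk_left hs).ennreal_toReal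

lemma measurable_sqDistCDF (t : ℝ) : Measurable fun x => sqDistCDF μ x t :=
  measurable_uncurry_sqDistCDF.of_uncurry_right

variable (hμ : ∀ x, ∃ T, ∀ᵐ z ∂μ, ‖z - x‖ ^ 2 ≤ T)
include hμ

lemma measurable_sqDistQuantile {u : ℝ} (hu0 : 0 < u) (hu1 : u ≤ 1) :
    Measurable fun x => sqDistQuantile μ x u := by
  refine measurable_of_Iic fun t => ?_
  have : (fun x => sqDistQuantile μ x u) ⁻¹' Iic t = {x | u ≤ sqDistCDF μ x t} :=
    ext fun x => sqDistQuantile_le_iff hu0 hu1 (hμ x) t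
  rw [this]
  exact measurableSet_le measurable_const (measurable_sqDistCDF t)

-- `sqDistQuantile_le_iff` only holds for `u ∈ (0, 1]`.
lemma measurable_ite_sqDistQuantile_uncurry :
    Measurable fun p : E × ℝ => if p.2 ∈ Ioc 0 1 then sqDistQuantile μ p.1 p.2 else 0 := by
  refine measurable_of_Iic fun t => ?_
  have : (fun p : E × ℝ => if p.2 ∈ Ioc 0 1 then sqDistQuantile μ p.1 p.2 else 0) ⁻¹' Iic t =
      {p | p.2 ∈ Ioc 0 1 ∧ p.2 ≤ sqDistCDF μ p.1 t} ∪ {p | p.2 ∉ Ioc 0 1 ∧ 0 ≤ t} := by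
    ext p
    by_cases hp : p.2 ∈ Ioc 0 1
    · rw [mem_preimage, mem_Iic, if_pos hp, sqDistQuantile_le_iff hp.1 hp.2 (hμ p.1)]
      simp only [mem_union, mem_ofPred_eq]
      tauto
    · rw [mem_preimage, mem_Iic, if_neg hp]
      simp only [mem_union, mem_ofPred_eq]
      tauto
  rw [this]
  exact ((measurable_snd measurableSet_Ioc).inter (measurableSet_le measurable_snd
    ((measurable_sqDistCDF t).comp measurable_fst))).union
    ((measurable_snd measurableSet_Ioc).compl.inter (MeasurableSet.const _))

lemma measurable_intervalIntegral_sqDistQuantile {m : ℝ} (hm0 : 0 < m) (hm1 : m ≤ 1) :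
    Measurable fun x => ∫ u in (0:ℝ)..m, sqDistQuantile μ x u := by
  have : (fun x => ∫ u in (0:ℝ)..m, sqDistQuantile μ x u) = fun x =>
      ∫ u in Ioc 0 m, (if u ∈ Ioc 0 1 then sqDistQuantile μ x u else 0) := by
    ext x
    rw [intervalIntegral.integral_of_le hm0.le]
    exact setIntegral_congr_fun measurableSet_Ioc fun u hu =>
      (if_pos ⟨hu.1, hu.2.trans hm1⟩).symm
  rw [this]
  exact (measurable_ite_sqDistQuantile_uncurry hμ).stronglyMeasurable.integral_prod_right'
    |>.measurable

end SqDist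

section CenteredTruncSqDist

variable {E : Type*} [NormedAddCommGroup E] [MeasurableSpace E] (μ : Measure E)

noncomputable def centeredTruncSqDist (κ : E → ℝ) (x₁ x₂ : E) : ℝ :=
  min (‖x₁ - x₂‖ ^ 2) (κ x₂) - ∫ z, min (‖z - x₂‖ ^ 2) (κ x₂) ∂μ

variable {μ} [OpensMeasurableSpace E]

lemma integrable_min_sq_norm_sub [IsFiniteMeasure μ] (a : E) (c : ℝ) :
    Integrable (fun z => min (‖z - a‖ ^ 2) c) μ := by
  refine Integrable.of_bound (((continuous_id.sub continuous_const).norm.pow 2).min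
    continuous_const).aestronglyMeasurable |c| (Eventually.of_forall fun z => ?_)
  rw [Real.norm_eq_abs, abs_le]
  exact ⟨le_min ((neg_nonpos.2 (abs_nonneg c)).trans (by positivity)) (neg_abs_le c),
    (min_le_right _ _).trans (le_abs_self c)⟩

lemma integrable_centeredTruncSqDist_left [IsFiniteMeasure μ] (κ : E → ℝ) (a : E) :
    Integrable (fun z => centeredTruncSqDist μ κ z a) μ :=
  (integrable_min_sq_norm_sub a _).sub (integrable_const _)

variable [IsProbabilityMeasure μ]

lemma integral_centeredTruncSqDist_left (κ : E → ℝ) (a : E) :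
    ∫ z, centeredTruncSqDist μ κ z a ∂μ = 0 := by
  simp only [centeredTruncSqDist]
  rw [integral_sub (integrable_min_sq_norm_sub a _) (integrable_const _), integral_const,
    probReal_univ, one_smul, sub_self]

lemma abs_centeredTruncSqDist_le {κ : E → ℝ} (x₁ : E) {x₂ : E} (hκ : 0 ≤ κ x₂) :
    |centeredTruncSqDist μ κ x₁ x₂| ≤ κ x₂ := by
  have hmin : ∀ z, 0 ≤ min (‖z - x₂‖ ^ 2) (κ x₂) := fun z => le_min (by positivity) hκ
  have hint_le : ∫ z, min (‖z - x₂‖ ^ 2) (κ x₂) ∂μ ≤ κ x₂ := by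
    simpa using integral_mono (μ := μ) (integrable_min_sq_norm_sub x₂ _)
      (integrable_const (κ x₂)) fun z => min_le_right _ _
  have : 0 ≤ ∫ z, min (‖z - x₂‖ ^ 2) (κ x₂) ∂μ := integral_nonneg hmin
  have := hmin x₁
  have := min_le_right (‖x₁ - x₂‖ ^ 2) (κ x₂)
  rw [centeredTruncSqDist, abs_le]
  constructor <;> linarith

lemma measurable_uncurry_centeredTruncSqDist [SecondCountableTopology E] {κ : E → ℝ}
    (hκ : Measurable κ) : Measurable (Function.uncurry (centeredTruncSqDist μ κ)) := by
  have hmean : Measurable fun x => ∫ z, min (‖z - x‖ ^ 2) (κ x) ∂μ :=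
    (((continuous_snd.sub continuous_fst).norm.pow 2).measurable.min
      (hκ.comp measurable_fst)).stronglyMeasurable.integral_prod_right'.measurable
  exact (((continuous_fst.sub continuous_snd).norm.pow 2).measurable.min
    (hκ.comp measurable_snd)).sub (hmean.comp measurable_snd)

lemma intervalIntegral_sqDistCDF_sub_ite_eq_centeredTruncSqDist {κ : E → ℝ} (a b : E)
    (hκ : 0 ≤ κ a) :
    ∫ t in (0:ℝ)..κ a, (sqDistCDF μ a t - if ‖b - a‖ ^ 2 ≤ t then (1:ℝ) else 0) =
      centeredTruncSqDist μ κ b a := by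
  rw [intervalIntegral.integral_sub (monotone_sqDistCDF a).intervalIntegrable
    (intervalIntegrable_ite_le _ 0 _), intervalIntegral_ite_le_eq (by positivity) hκ,
    centeredTruncSqDist, integral_min_eq_sub_intervalIntegral μ (f := fun z => ‖z - a‖ ^ 2)
      ((continuous_id.sub continuous_const).norm.pow 2).measurable (fun z => by positivity) hκ]
  unfold sqDistCDF
  ring

variable {B : E → ℝ} {CB : ℝ} {κ : E → ℝ} {C : ℝ}

lemma ae_norm_mul_centeredTruncSqDist_le (hB : ∀ x, ‖B x‖ ≤ CB) (hκ0 : ∀ x, 0 ≤ κ x)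
    (hκC : ∀ᵐ x ∂μ, κ x ≤ C) :
    ∀ᵐ x₂ ∂μ, ∀ x₁, ‖B x₂ * centeredTruncSqDist μ κ x₁ x₂‖ ≤ CB * C :=
  hκC.mono fun x₂ hx₂ x₁ => by
    rw [norm_mul, Real.norm_eq_abs]
    exact mul_le_mul (hB x₂) ((abs_centeredTruncSqDist_le x₁ (hκ0 x₂)).trans hx₂)
      (abs_nonneg _) ((norm_nonneg _).trans (hB x₂))

variable [SecondCountableTopology E]

lemma integrable_mul_centeredTruncSqDist_right (hBm : Measurable B) (hB : ∀ x, ‖B x‖ ≤ CB)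
    (hκ : Measurable κ) (hκ0 : ∀ x, 0 ≤ κ x) (hκC : ∀ᵐ x ∂μ, κ x ≤ C) (x₁ : E) :
    Integrable (fun z => B z * centeredTruncSqDist μ κ x₁ z) μ :=
  Integrable.of_bound (hBm.mul ((measurable_uncurry_centeredTruncSqDist hκ).comp
      measurable_prodMk_left)).aestronglyMeasurable _
    ((ae_norm_mul_centeredTruncSqDist_le hB hκ0 hκC).mono fun _ h => h x₁)

lemma integrable_prod_mul_centeredTruncSqDist (hBm : Measurable B) (hB : ∀ x, ‖B x‖ ≤ CB)
    (hκ : Measurable κ) (hκ0 : ∀ x, 0 ≤ κ x) (hκC : ∀ᵐ x ∂μ, κ x ≤ C) :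
    Integrable (fun p : E × E => B p.2 * centeredTruncSqDist μ κ p.1 p.2) (μ.prod μ) :=
  Integrable.of_bound ((hBm.comp measurable_snd).mul
      (measurable_uncurry_centeredTruncSqDist hκ)).aestronglyMeasurable _
    (Measure.quasiMeasurePreserving_snd.ae (ae_norm_mul_centeredTruncSqDist_le hB hκ0 hκC)
      |>.mono fun p h => h p.1)

end CenteredTruncSqDist

lemma continuous_and_hasCompactSupport_of_hasDerivAt {K K' : ℝ → ℝ} (hK : ContDiff ℝ 1 K)
    (hK' : ∀ t, HasDerivAt K (K' t) t) (hs : HasCompactSupport K) :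
    Continuous K' ∧ HasCompactSupport K' := by
  obtain rfl : K' = deriv K := funext fun t => (hK' t).deriv.symm
  exact ⟨hK.continuous_deriv le_rfl, hs.deriv⟩

lemma integrable_const_mul_comp {X : Type*} [MeasurableSpace X] {μ : Measure X}
    [IsFiniteMeasure μ] {φ : ℝ → ℝ} (hφ : Continuous φ) (hs : HasCompactSupport φ) {f : X → ℝ}
    (hf : Measurable f) (c : ℝ) : Integrable (fun x => c * φ (f x)) μ :=
  let ⟨_, hC⟩ := hs.exists_bound_of_continuous hφ
  Integrable.of_bound (measurable_const.mul (hφ.measurable.comp hf)).aestronglyMeasurable _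
    (Eventually.of_forall fun _ => norm_mul_le_of_le le_rfl (hC _))

section Hoeffding

variable {X : Type*} [MeasurableSpace X] {μ : Measure X} [IsProbabilityMeasure μ]
  {g : X → X → ℝ} {A B : X → ℝ} {Ψ : X → X → ℝ}

lemma hoeffding_integral_right (hg : ∀ x z, g x z = A x + A z + B x * Ψ z x + B z * Ψ x z)
    (hA : Integrable A μ) (hΨ : ∀ a, Integrable (fun z => Ψ z a) μ)
    (hΨ_mean : ∀ a, ∫ z, Ψ z a ∂μ = 0) (hBΨ : ∀ x, Integrable (fun z => B z * Ψ x z) μ)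
    (x : X) :
    ∫ z, g x z ∂μ = A x + ∫ z, A z ∂μ + ∫ z, B z * Ψ x z ∂μ := by
  have h₁ : Integrable (fun z => A x + A z) μ := (integrable_const _).add hA
  have h₂ : Integrable (fun z => A x + A z + B x * Ψ z x) μ := h₁.add ((hΨ x).const_mul _)
  simp_rw [hg]
  rw [integral_add h₂ (hBΨ x), integral_add h₁ ((hΨ x).const_mul _),
    integral_add (integrable_const _) hA, integral_const, integral_const_mul, hΨ_mean,
    probReal_univ, one_smul, mul_zero, add_zero]

lemma hoeffding_integral_integral (hg : ∀ x z, g x z = A x + A z + B x * Ψ z x + B z * Ψ x z)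
    (hA : Integrable A μ) (hΨ : ∀ a, Integrable (fun z => Ψ z a) μ)
    (hΨ_mean : ∀ a, ∫ z, Ψ z a ∂μ = 0) (hBΨ : ∀ x, Integrable (fun z => B z * Ψ x z) μ)
    (hBΨ_prod : Integrable (fun p : X × X => B p.2 * Ψ p.1 p.2) (μ.prod μ)) :
    ∫ x, ∫ z, g x z ∂μ ∂μ = 2 * ∫ z, A z ∂μ := by
  have h₁ : Integrable (fun x => A x + ∫ z, A z ∂μ) μ := hA.add (integrable_const _)
  simp_rw [hoeffding_integral_right hg hA hΨ hΨ_mean hBΨ]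
  rw [integral_add h₁ hBΨ_prod.integral_prod_left,
    integral_add hA (integrable_const _), integral_const, probReal_univ, one_smul,
    integral_integral_swap (f := fun x z => B z * Ψ x z) hBΨ_prod]
  simp_rw [integral_const_mul, hΨ_mean, mul_zero, integral_zero]
  ring

lemma hoeffding_first_projection (hg : ∀ x z, g x z = A x + A z + B x * Ψ z x + B z * Ψ x z)
    (hA : Integrable A μ) (hΨ : ∀ a, Integrable (fun z => Ψ z a) μ)
    (hΨ_mean : ∀ a, ∫ z, Ψ z a ∂μ = 0) (hBΨ : ∀ x, Integrable (fun z => B z * Ψ x z) μ)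
    (hBΨ_prod : Integrable (fun p : X × X => B p.2 * Ψ p.1 p.2) (μ.prod μ)) (x : X) :
    ∫ z, g x z ∂μ - ∫ z₁, ∫ z₂, g z₁ z₂ ∂μ ∂μ =
      A x - (∫ z₁, ∫ z₂, g z₁ z₂ ∂μ ∂μ) / 2 + ∫ z, B z * Ψ x z ∂μ := by
  rw [hoeffding_integral_integral hg hA hΨ hΨ_mean hBΨ hBΨ_prod,
    hoeffding_integral_right hg hA hΨ hΨ_mean hBΨ]
  ring

end Hoeffding

theorem stmt_16_general {d : ℕ} (𝒳 : Set (EuclideanSpace ℝ (Fin d))) (h𝒳 : IsCompact 𝒳)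
    (μ : Measure (EuclideanSpace ℝ (Fin d))) [IsProbabilityMeasure μ]
    (hsupp : μ 𝒳 = 1) (m : ℝ) (hm0 : 0 < m) (hm1 : m ≤ 1) (y h : ℝ)
    (F : EuclideanSpace ℝ (Fin d) → ℝ → ℝ)
    (hF : ∀ x t, F x t = (μ {z | ‖z - x‖ ^ 2 ≤ t}).toReal)
    (Finv : EuclideanSpace ℝ (Fin d) → ℝ → ℝ)
    (hFinv : ∀ x u, Finv x u = sInf {t : ℝ | u ≤ F x t})
    -- the DTM function with mass parameter m
    (d2 : EuclideanSpace ℝ (Fin d) → ℝ)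
    (hd2 : ∀ x, d2 x = (1 / m) * ∫ u in (0:ℝ)..m, Finv x u)
    -- a C² kernel supported on [-1,1], with derivative K'
    (K K' : ℝ → ℝ) (hKC2 : ContDiff ℝ 2 K) (hK' : ∀ t, HasDerivAt K (K' t) t)
    (hKsupp : tsupport K = Set.Icc (-1:ℝ) 1)
    -- the symmetric U-statistic kernel g = g⁽¹⁾ + g⁽²⁾
    (g : EuclideanSpace ℝ (Fin d) → EuclideanSpace ℝ (Fin d) → ℝ)
    (hg : ∀ x₁ x₂, g x₁ x₂ =
      (1 / (2 * h)) * (K ((d2 x₁ - y) / h) + K ((d2 x₂ - y) / h)) +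
      (1 / (2 * m * h ^ 2)) *
        (K' ((d2 x₁ - y) / h) *
            (∫ t in (0:ℝ)..(Finv x₁ m),
              (F x₁ t - if ‖x₁ - x₂‖ ^ 2 ≤ t then (1:ℝ) else 0)) +
          K' ((d2 x₂ - y) / h) *
            (∫ t in (0:ℝ)..(Finv x₂ m),
              (F x₂ t - if ‖x₁ - x₂‖ ^ 2 ≤ t then (1:ℝ) else 0))))
    (Θ : ℝ) (hΘ : Θ = ∫ z₁, ∫ z₂, g z₁ z₂ ∂μ ∂μ)
    (Ψ : EuclideanSpace ℝ (Fin d) → EuclideanSpace ℝ (Fin d) → ℝ)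
    (hΨ : ∀ x₁ x₂, Ψ x₁ x₂ =
      min (‖x₁ - x₂‖ ^ 2) (Finv x₂ m) - ∫ z, min (‖z - x₂‖ ^ 2) (Finv x₂ m) ∂μ) :
    ∀ x₁, (∫ z, g x₁ z ∂μ) - Θ =
      (1 / (2 * h)) * K ((d2 x₁ - y) / h) - Θ / 2 +
        ∫ z, (1 / (2 * m * h ^ 2)) * K' ((d2 z - y) / h) * Ψ x₁ z ∂μ := by
  obtain rfl : F = sqDistCDF μ := funext fun x => funext (hF x)
  obtain rfl : Finv = sqDistQuantile μ := funext fun x => funext (hFinv x)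
  obtain rfl : Ψ = centeredTruncSqDist μ (sqDistQuantile μ · m) := funext fun x => funext (hΨ x)
  subst hΘ
  have hμ𝒳 : ∀ᵐ z ∂μ, z ∈ 𝒳 := (mem_ae_iff_prob_eq_one h𝒳.measurableSet).2 hsupp
  have hbdd := exists_ae_sq_norm_sub_le h𝒳.isBounded hμ𝒳
  have hκ := measurable_sqDistQuantile hbdd hm0 hm1
  have hκ0 : ∀ x, 0 ≤ sqDistQuantile μ x m := fun x => sqDistQuantile_nonneg x hm0
  have hκC := ae_sqDistQuantile_le_sq_diam h𝒳.isBounded hμ𝒳 hm0 hm1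
  have hd2m : Measurable d2 := funext hd2 ▸
    measurable_const.mul (measurable_intervalIntegral_sqDistQuantile hbdd hm0 hm1)
  have hKs : HasCompactSupport K := by rw [HasCompactSupport, hKsupp]; exact isCompact_Icc
  obtain ⟨hK'c, hK's⟩ :=
    continuous_and_hasCompactSupport_of_hasDerivAt (hKC2.of_le one_le_two) hK' hKs
  obtain ⟨CK', hCK'⟩ := hK's.exists_bound_of_continuous hK'c
  have hdm : Measurable fun x => (d2 x - y) / h := (hd2m.sub measurable_const).div_const h
  let B : EuclideanSpace ℝ (Fin d) → ℝ := fun x => 1 / (2 * m * h ^ 2) * K' ((d2 x - y) / h)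
  have hBm : Measurable B := measurable_const.mul (hK'c.measurable.comp hdm)
  have hB : ∀ x, ‖B x‖ ≤ ‖1 / (2 * m * h ^ 2)‖ * CK' :=
    fun _ => norm_mul_le_of_le le_rfl (hCK' _)
  intro x₁
  refine hoeffding_first_projection (A := fun x => 1 / (2 * h) * K ((d2 x - y) / h)) (B := B)
    (fun x z => ?_) (integrable_const_mul_comp hKC2.continuous hKs hdm _)
    (integrable_centeredTruncSqDist_left _) (integral_centeredTruncSqDist_left _)
    (integrable_mul_centeredTruncSqDist_right hBm hB hκ hκ0 hκC)
    (integrable_prod_mul_centeredTruncSqDist hBm hB hκ hκ0 hκC) x₁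
  have hkey := intervalIntegral_sqDistCDF_sub_ite_eq_centeredTruncSqDist (μ := μ)
    (κ := (sqDistQuantile μ · m))
  rw [hg, ← norm_sub_rev z x, hkey x z (hκ0 x), norm_sub_rev z x, hkey z x (hκ0 z)]
  ring

theorem stmt_16 {d : ℕ} (𝒳 : Set (EuclideanSpace ℝ (Fin d))) (h𝒳 : IsCompact 𝒳)
    (μ : Measure (EuclideanSpace ℝ (Fin d))) [IsProbabilityMeasure μ]
    (hsupp : μ 𝒳 = 1) (m : ℝ) (hm0 : 0 < m) (hm1 : m ≤ 1) (y h : ℝ) (hh : 0 < h)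
    (F : EuclideanSpace ℝ (Fin d) → ℝ → ℝ)
    (hF : ∀ x t, F x t = (μ {z | ‖z - x‖ ^ 2 ≤ t}).toReal)
    (Finv : EuclideanSpace ℝ (Fin d) → ℝ → ℝ)
    (hFinv : ∀ x u, Finv x u = sInf {t : ℝ | u ≤ F x t})
    -- the DTM function with mass parameter m
    (d2 : EuclideanSpace ℝ (Fin d) → ℝ)
    (hd2 : ∀ x, d2 x = (1 / m) * ∫ u in (0:ℝ)..m, Finv x u)
    -- a C² kernel supported on [-1,1], with derivative K'
    (K K' : ℝ → ℝ) (hKC2 : ContDiff ℝ 2 K) (hK' : ∀ t, HasDerivAt K (K' t) t)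
    (hKsupp : tsupport K = Set.Icc (-1:ℝ) 1)
    -- the symmetric U-statistic kernel g = g⁽¹⁾ + g⁽²⁾
    (g : EuclideanSpace ℝ (Fin d) → EuclideanSpace ℝ (Fin d) → ℝ)
    (hg : ∀ x₁ x₂, g x₁ x₂ =
      (1 / (2 * h)) * (K ((d2 x₁ - y) / h) + K ((d2 x₂ - y) / h)) +
      (1 / (2 * m * h ^ 2)) *
        (K' ((d2 x₁ - y) / h) *
            (∫ t in (0:ℝ)..(Finv x₁ m),
              (F x₁ t - if ‖x₁ - x₂‖ ^ 2 ≤ t then (1:ℝ) else 0)) +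
          K' ((d2 x₂ - y) / h) *
            (∫ t in (0:ℝ)..(Finv x₂ m),
              (F x₂ t - if ‖x₁ - x₂‖ ^ 2 ≤ t then (1:ℝ) else 0))))
    (Θ : ℝ) (hΘ : Θ = ∫ z₁, ∫ z₂, g z₁ z₂ ∂μ ∂μ)
    (Ψ : EuclideanSpace ℝ (Fin d) → EuclideanSpace ℝ (Fin d) → ℝ)
    (hΨ : ∀ x₁ x₂, Ψ x₁ x₂ =
      min (‖x₁ - x₂‖ ^ 2) (Finv x₂ m) - ∫ z, min (‖z - x₂‖ ^ 2) (Finv x₂ m) ∂μ) :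
    ∀ x₁, (∫ z, g x₁ z ∂μ) - Θ =
      (1 / (2 * h)) * K ((d2 x₁ - y) / h) - Θ / 2 +
        ∫ z, (1 / (2 * m * h ^ 2)) * K' ((d2 z - y) / h) * Ψ x₁ z ∂μ :=
  stmt_16_general 𝒳 h𝒳 μ hsupp m hm0 hm1 y h F hF Finv hFinv d2 hd2 K K' hKC2 hK' hKsupp g hg Θ hΘ Ψ
    hΨ
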